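/- arXiv:2104.03215 — 10 statements merged into one kernel-verified Lean document; each statement's English description precedes it below -/
import Mathlib

section
/- Let M be a locally finite meet-semilattice with a minimal element 0̂, and let u ≤ v be elements of M with the interval [0̂, v] finite. Then there exists a semilattice congruence on M having the closed interval [u, v] as one of its congruence classes. -/
/-- In a locally finite meet-semilattice with minimal element `⊥`, for `u ≤ v`
with `[⊥, v]` finite, there is a semilattice congruence having `[u, v]` as a congruence
class. -/
theorem stmt_2 {M : Type*} [SemilatticeInf M] [OrderBot M] [LocallyFiniteOrder M]
    (u v : M) (huv : u ≤ v) (hfin : (Set.Icc (⊥ : M) v).Finite) :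
    ∃ r : M → M → Prop, Equivalence r ∧
      (∀ x1 x2 y1 y2, r x1 x2 → r y1 y2 → r (x1 ⊓ y1) (x2 ⊓ y2)) ∧
      {x | r x u} = Set.Icc u v := by
  refine ⟨fun x y => ∀ a : M, (a = u ∨ ¬ a ≤ v) → (a ≤ x ↔ a ≤ y), ?_, ?_, ?_⟩
  · exact ⟨fun x a _ => Iff.rfl, fun h a ha => (h a ha).symm,
      fun h1 h2 a ha => (h1 a ha).trans (h2 a ha)⟩
  · intro x1 x2 y1 y2 h1 h2 a ha
    simp only [le_inf_iff, h1 a ha, h2 a ha]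
  · ext x
    simp only [Set.mem_setOf_eq, Set.mem_Icc]
    constructor
    · intro h
      refine ⟨(h u (Or.inl rfl)).mpr le_rfl, ?_⟩
      by_contra hxv
      exact hxv (le_trans ((h x (Or.inr hxv)).mp le_rfl) huv)
    · rintro ⟨hux, hxv⟩ a ha
      rcases ha with rfl | ha
      · simp [hux]
      · constructor
        · intro hax; exact absurd (hax.trans hxv) ha
        · intro hau; exact absurd (hau.trans huv) ha
end

section
/- A semilattice congruence ≡ on the left weak order of a Coxeter group W is essential (i.e., the identity element e forms a singleton congruence class) if and only if ≡ refines the descent congruence, i.e., v ≡ w implies that v and w have the same right descent set. -/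
/-- A semilattice congruence on the left weak order of a Coxeter group is
essential (the identity forms a singleton class) iff it refines the descent congruence. -/
theorem stmt_3 {B W : Type*} [Group W] {M : CoxeterMatrix B} (cs : CoxeterSystem M W)
    -- the left weak order
    (lL : W → W → Prop) (hlL : ∀ x y, lL x y ↔ cs.length (y * x⁻¹) + cs.length x = cs.length y)
    -- meets for the left weak order
    (inf : W → W → W)
    (hinf : ∀ x y, lL (inf x y) x ∧ lL (inf x y) y ∧ ∀ z, lL z x → lL z y → lL z (inf x y))
    -- a semilattice congruence
    (r : W → W → Prop) (hequiv : Equivalence r)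
    (hcong : ∀ x1 x2 y1 y2, r x1 x2 → r y1 y2 → r (inf x1 y1) (inf x2 y2)) :
    (∀ x, r x 1 → x = 1) ↔
      (∀ v w, r v w → ∀ i : B, (cs.IsRightDescent v i ↔ cs.IsRightDescent w i)) := by
  have hrefl : ∀ x, lL x x := by intro x; rw [hlL]; simp
  have hantisym : ∀ x y, lL x y → lL y x → x = y := by
    intro x y hxy hyx
    rw [hlL] at hxy hyx
    have h1 : cs.length (y * x⁻¹) = 0 := by omega
    have h2 := (cs.length_eq_zero_iff).mp h1
    exact (mul_inv_eq_one.mp h2).symm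
  -- s ≤ w iff i is a right descent of w
  have hsle : ∀ (i : B) (w : W), lL (cs.simple i) w ↔ cs.IsRightDescent w i := by
    intro i w
    rw [hlL, cs.inv_simple, cs.length_simple, cs.isRightDescent_iff]
  -- elements below a simple reflection
  have hbelow : ∀ (i : B) (z : W), lL z (cs.simple i) → z = 1 ∨ z = cs.simple i := by
    intro i z hz
    rw [hlL, cs.length_simple] at hz
    rcases Nat.eq_zero_or_pos (cs.length z) with h0 | hpos
    · exact Or.inl (cs.length_eq_zero_iff.mp h0)
    · right
      have h1 : cs.length (cs.simple i * z⁻¹) = 0 := by omega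
      have := cs.length_eq_zero_iff.mp h1
      have : cs.simple i = z := by
        rwa [mul_inv_eq_one] at this
      exact this.symm
  constructor
  · intro hess
    have key : ∀ v w, r v w → ∀ i : B, cs.IsRightDescent v i → cs.IsRightDescent w i := by
      intro v w hvw i hdv
      set s := cs.simple i with hs
      have hsv : lL s v := (hsle i v).mpr hdv
      have hinfsv : inf s v = s :=
        hantisym _ _ ((hinf s v).1) ((hinf s v).2.2 s (hrefl s) hsv)
      have hr : r (inf s v) (inf s w) := hcong _ _ _ _ (hequiv.refl s) hvw
      rw [hinfsv] at hr
      rcases hbelow i (inf s w) ((hinf s w).1) with h1 | h2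
      · rw [h1] at hr
        have := hess s hr
        have hl : cs.length s = 0 := by rw [this]; exact cs.length_one
        rw [hs, cs.length_simple] at hl
        omega
      · have hsw : lL s w := by have := (hinf s w).2.1; rwa [h2, ← hs] at this
        exact (hsle i w).mp hsw
    intro v w hvw i
    exact ⟨key v w hvw i, key w v (hequiv.symm hvw) i⟩
  · intro href x hx
    by_contra hne
    obtain ⟨i, hi⟩ := cs.exists_rightDescent_of_ne_one hne
    exact cs.not_isRightDescent_one i ((href x 1 hx i).mp hi)
end

section
/- Let W be a Coxeter group and ≡ an essential semilattice congruence on the left weak order of W, with downward projection π_↓ sending each element to the minimal element of its congruence class. Define S_≡(w) = w·(π_↓(w))⁻¹. Then for every w ∈ W and every x ∈ D_R(w) ∪ {e}, we have S_≡(w) ≤_R wx, where ≤_R is the right weak order. In particular S_≡(w) ≤_R w. -/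
/-- Coxeter stack-sorting operators are compulsive: for every `w` and every
`x ∈ D_R(w) ∪ {e}`, we have `S_≡(w) ≤_R w * x`. -/
theorem stmt_4 {B W : Type*} [Group W] {M : CoxeterMatrix B} (cs : CoxeterSystem M W)
    -- the left and right weak orders
    (lL lR : W → W → Prop)
    (hlL : ∀ x y, lL x y ↔ cs.length (y * x⁻¹) + cs.length x = cs.length y)
    (hlR : ∀ x y, lR x y ↔ cs.length (x⁻¹ * y) + cs.length x = cs.length y)
    -- meets for the left weak order
    (inf : W → W → W)
    (hinf : ∀ x y, lL (inf x y) x ∧ lL (inf x y) y ∧ ∀ z, lL z x → lL z y → lL z (inf x y))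
    -- an essential semilattice congruence
    (r : W → W → Prop) (hequiv : Equivalence r)
    (hcong : ∀ x1 x2 y1 y2, r x1 x2 → r y1 y2 → r (inf x1 y1) (inf x2 y2))
    (hess : ∀ x, r x 1 → x = 1)
    -- the downward projection map
    (pd : W → W) (hpd : ∀ w, r (pd w) w ∧ ∀ u, r u w → lL (pd w) u) :
    ∀ w : W, lR (w * (pd w)⁻¹) w ∧
      ∀ i : B, cs.IsRightDescent w i → lR (w * (pd w)⁻¹) (w * cs.simple i) := by
  intro w
  set p := pd w with hpdef
  obtain ⟨hrpw, hmin⟩ := hpd w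
  -- p ≤_L w
  have hA : cs.length (w * p⁻¹) + cs.length p = cs.length w := by
    have := hmin w (hequiv.refl w)
    rwa [hlL] at this
  constructor
  · -- part 1
    rw [hlR]
    have : (w * p⁻¹)⁻¹ * w = p := by group
    rw [this]
    omega
  · intro i hi
    set s := cs.simple i with hsdef
    have hsinv : s⁻¹ = s := cs.inv_simple i
    have hslen : cs.length s = 1 := cs.length_simple i
    have hdesc : cs.length (w * s) + 1 = cs.length w := cs.isRightDescent_iff.mp hi
    -- s ≤_L w
    have hsw : lL s w := by rw [hlL, hsinv, hslen]; omega
    -- inf w s = s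
    have hss : lL s s := by
      rw [hlL]; simp [cs.length_one, hslen]
    have hinfws : inf w s = s := by
      obtain ⟨h1, h2, h3⟩ := hinf w s
      have h4 := h3 s hsw hss
      rw [hlL] at h2 h4
      have e2 : cs.length (s * (inf w s)⁻¹) = 0 ∧ cs.length (inf w s * s⁻¹) = 0 := by omega
      have := cs.length_eq_zero_iff.mp e2.2
      have : inf w s = s := by
        rw [hsinv] at this
        have := mul_eq_one_iff_eq_inv.mp this
        rw [this, hsinv]
      exact this
    -- the meet of p and s is 1 or s
    obtain ⟨hz1, hz2, _⟩ := hinf p s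
    rw [hlL] at hz1 hz2
    have hcase : cs.length (inf p s) = 0 ∨ cs.length (s * (inf p s)⁻¹) = 0 := by omega
    -- show s is a right descent of p
    have hB : cs.length (p * s) + 1 = cs.length p := by
      rcases hcase with hc | hc
      · -- inf p s = 1, use congruence + essentiality to get contradiction
        exfalso
        have hz : inf p s = 1 := cs.length_eq_zero_iff.mp hc
        have hrs : r (inf p s) (inf w s) := hcong p w s s hrpw (hequiv.refl s)
        rw [hz, hinfws] at hrs
        have hs1 : s = 1 := hess s (hequiv.symm hrs)
        rw [hs1, cs.length_one] at hslen
        exact one_ne_zero hslen.symm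
      · -- inf p s = s, so s ≤_L p
        have hz : inf p s = s := by
          have := cs.length_eq_zero_iff.mp hc
          have h := mul_eq_one_iff_eq_inv.mp this
          rw [inv_inv] at h
          exact h.symm
        rw [hz, hsinv] at hz1
        omega
    -- conclude
    rw [hlR]
    have : (w * p⁻¹)⁻¹ * (w * s) = p * s := by group
    rw [this]
    omega
end

section
/- Let W be a Coxeter group, ≡ an essential semilattice congruence on the left weak order of W with finitely many congruence classes, say K classes, and S_≡ the associated Coxeter stack-sorting operator S_≡(w) = w·(π_↓(w))⁻¹. Then the identity element e has exactly K preimages under S_≡, and every element v ≠ e has at most K − 1 preimages. -/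
/-!
Since `w * (π_↓ w)⁻¹ = 1` iff `π_↓ w = w`, the preimages of `e` are the minima of the congruence
classes, one for each class. For `v ≠ e`, a preimage `w` of `v` is recovered from `π_↓ w` as
`w = v * π_↓ w`, so `w ↦ π_↓ w` injects the fibre over `v` into the class minima; it misses `e`,
because `π_↓ w = e` forces `w ≡ e`, hence `w = e` and `v = e`.
-/

open Function

theorem CoxeterSystem.weakOrder_antisymm {B W : Type*} [Group W] {M : CoxeterMatrix B}
    (cs : CoxeterSystem M W) {x y : W}
    (hxy : cs.length (y * x⁻¹) + cs.length x = cs.length y)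
    (hyx : cs.length (x * y⁻¹) + cs.length y = cs.length x) : x = y :=
  mul_inv_eq_one.mp (cs.length_eq_zero_iff.mp (by omega))

section ClassMinimum

variable {α : Type*} {r : α → α → Prop} {pd : α → α}

theorem eq_of_rel_of_isClassMinimum {le : α → α → Prop}
    (hanti : ∀ x y, le x y → le y x → x = y) (hr : Equivalence r)
    (hpd : ∀ w, r (pd w) w ∧ ∀ u, r u w → le (pd w) u) {u w : α} (h : r u w) : pd u = pd w :=
  hanti _ _ ((hpd u).2 _ (hr.trans (hpd w).1 (hr.symm h))) ((hpd w).2 _ (hr.trans (hpd u).1 h))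

def fixedPointsEquivQuot (hrep : ∀ w, r (pd w) w) (hconst : ∀ u w, r u w → pd u = pd w) :
    fixedPoints pd ≃ Quot r where
  toFun u := Quot.mk r u
  invFun := Quot.lift (fun w => ⟨pd w, hconst _ _ (hrep w)⟩) fun _ _ h => Subtype.ext (hconst _ _ h)
  left_inv u := Subtype.ext u.2
  right_inv := Quot.ind fun w => Quot.sound (hrep w)

end ClassMinimum

section StackSorting

variable {W : Type*} [Group W] (pd : W → W)

theorem card_stackSort_fiber_one :
    Nat.card {w : W // w * (pd w)⁻¹ = 1} = Nat.card (fixedPoints pd) :=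
  Nat.card_congr <| Equiv.subtypeEquivRight fun _ => mul_inv_eq_one.trans eq_comm

theorem card_stackSort_fiber_le [Finite (fixedPoints pd)] (hidem : ∀ w, IsFixedPt pd (pd w))
    (hpd1 : IsFixedPt pd 1) (heq1 : ∀ w, pd w = 1 → w = 1) {v : W} (hv : v ≠ 1) :
    Nat.card {w : W // w * (pd w)⁻¹ = v} ≤ Nat.card (fixedPoints pd) - 1 := by
  let toMin (w : {w : W // w * (pd w)⁻¹ = v}) : ↥(fixedPoints pd \ {1}) :=
    ⟨pd w, hidem w, fun (h : pd w = 1) => hv <| by rw [← w.2, h, heq1 w h, inv_one, one_mul]⟩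
  have hinj : Injective toMin := by
    rintro ⟨w, hw⟩ ⟨w', hw'⟩ h
    have hpd : pd w = pd w' := congrArg Subtype.val h
    rw [mul_inv_eq_iff_eq_mul] at hw hw'
    exact Subtype.ext (hw.trans (hpd ▸ hw'.symm))
  calc Nat.card {w : W // w * (pd w)⁻¹ = v}
      ≤ Nat.card ↥(fixedPoints pd \ {1}) := Nat.card_le_card_of_injective toMin hinj
    _ = Nat.card (fixedPoints pd) - 1 := by
      rw [Nat.card_coe_set_eq, Nat.card_coe_set_eq,
        Set.ncard_sdiff_singleton_of_mem (s := fixedPoints pd) hpd1]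

end StackSorting

theorem stmt_5_general {B W : Type*} [Group W] {M : CoxeterMatrix B} (cs : CoxeterSystem M W)
    (lL : W → W → Prop) (hlL : ∀ x y, lL x y ↔ cs.length (y * x⁻¹) + cs.length x = cs.length y)
    (r : W → W → Prop) (hequiv : Equivalence r)
    (hess : ∀ x, r x 1 → x = 1)
    (pd : W → W) (hpd : ∀ w, r (pd w) w ∧ ∀ u, r u w → lL (pd w) u)
    -- there are exactly `K` congruence classes, and `K` is finite
    (K : ℕ) (hfin : Finite (Quot r)) (hK : Nat.card (Quot r) = K) :
    Nat.card {w : W // w * (pd w)⁻¹ = 1} = K ∧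
      ∀ v : W, v ≠ 1 → Nat.card {w : W // w * (pd w)⁻¹ = v} ≤ K - 1 := by
  have hanti (x y : W) (hxy : lL x y) (hyx : lL y x) : x = y :=
    cs.weakOrder_antisymm ((hlL x y).1 hxy) ((hlL y x).1 hyx)
  have hrep (w : W) : r (pd w) w := (hpd w).1
  have hconst (u w : W) (h : r u w) : pd u = pd w := eq_of_rel_of_isClassMinimum hanti hequiv hpd h
  let e := fixedPointsEquivQuot hrep hconst
  have hcard : Nat.card (fixedPoints pd) = K := (Nat.card_congr e).trans hK
  have : Finite (fixedPoints pd) := e.finite_iff.mpr hfin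
  have heq1 (w : W) (h : pd w = 1) : w = 1 := hess w (hequiv.symm (h ▸ hrep w))
  refine ⟨(card_stackSort_fiber_one pd).trans hcard, fun v hv => hcard ▸ ?_⟩
  exact card_stackSort_fiber_le pd (fun w => hconst _ _ (hrep w)) (hess _ (hrep 1)) heq1 hv

/-- If an essential semilattice congruence on the left weak order of a Coxeter
group has exactly `K` congruence classes, then the identity has exactly `K` preimages under
the Coxeter stack-sorting operator `S_≡(w) = w * (π_↓ w)⁻¹`, and every other element has at
most `K - 1` preimages. -/
theorem stmt_5 {B W : Type*} [Group W] {M : CoxeterMatrix B} (cs : CoxeterSystem M W)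
    (lL : W → W → Prop) (hlL : ∀ x y, lL x y ↔ cs.length (y * x⁻¹) + cs.length x = cs.length y)
    (inf : W → W → W)
    (hinf : ∀ x y, lL (inf x y) x ∧ lL (inf x y) y ∧ ∀ z, lL z x → lL z y → lL z (inf x y))
    (r : W → W → Prop) (hequiv : Equivalence r)
    (hcong : ∀ x1 x2 y1 y2, r x1 x2 → r y1 y2 → r (inf x1 y1) (inf x2 y2))
    (hess : ∀ x, r x 1 → x = 1)
    (pd : W → W) (hpd : ∀ w, r (pd w) w ∧ ∀ u, r u w → lL (pd w) u)
    -- there are exactly `K` congruence classes, and `K` is finite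
    (K : ℕ) (hfin : Finite (Quot r)) (hK : Nat.card (Quot r) = K) :
    Nat.card {w : W // w * (pd w)⁻¹ = 1} = K ∧
      ∀ v : W, v ≠ 1 → Nat.card {w : W // w * (pd w)⁻¹ = v} ≤ K - 1 :=
  stmt_5_general cs lL hlL r hequiv hess pd hpd K hfin hK
end

section
/- Let W be a Coxeter group, ≡ an essential semilattice congruence on the left weak order of W, and S_≡(w) = w·(π_↓(w))⁻¹ the associated Coxeter stack-sorting operator. If v ≤_L w in the left weak order, then the number of preimages of v under S_≡ is at least the number of preimages of w under S_≡ (as cardinalities: there is an injection from S_≡⁻¹(w) into S_≡⁻¹(v)). Moreover, if w = sv with s a simple generator and ℓ(w) = ℓ(v)+1, the injection is given by u ↦ su. -/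
/-!
The key fact is that `S = S_≡` commutes with left multiplication by a left descent `s` of `S u`:
`S (s u) = s S u`. Indeed, writing `p = π_↓ u`, the element `s u` lies between `p` and `u` in the
left weak order, and congruence classes of a meet-semilattice congruence are order-convex, so
`s u ≡ u` and `π_↓ (s u) = p`. Hence `u ↦ s u` maps `S⁻¹(w)` injectively into `S⁻¹(s w)` whenever
`s` is a left descent of `w`, and composing these maps along a chain of covers from `w` down to `v`
gives the injection `S⁻¹(w) → S⁻¹(v)`.
-/

section SemilatticeCongruence

variable {α : Type*} {le : α → α → Prop} {inf : α → α → α} {r : α → α → Prop}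

theorem inf_eq_left_of_rel [Std.Refl le] [Std.Antisymm le]
    (hinf : ∀ x y, le (inf x y) x ∧ le (inf x y) y ∧ ∀ z, le z x → le z y → le z (inf x y))
    {x y : α} (h : le x y) : inf x y = x :=
  antisymm (hinf x y).1 ((hinf x y).2.2 x (refl x) h)

theorem inf_eq_right_of_rel [Std.Refl le] [Std.Antisymm le]
    (hinf : ∀ x y, le (inf x y) x ∧ le (inf x y) y ∧ ∀ z, le z x → le z y → le z (inf x y))
    {x y : α} (h : le y x) : inf x y = y :=
  antisymm (hinf x y).2.1 ((hinf x y).2.2 y h (refl y))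

theorem rel_of_le_of_le [Std.Refl le] [Std.Antisymm le]
    (hinf : ∀ x y, le (inf x y) x ∧ le (inf x y) y ∧ ∀ z, le z x → le z y → le z (inf x y))
    (hr : Equivalence r) (hcong : ∀ x1 x2 y1 y2, r x1 x2 → r y1 y2 → r (inf x1 y1) (inf x2 y2))
    {a b c : α} (hab : le a b) (hbc : le b c) (hac : r a c) : r b c := by
  have h := hcong b b c a (hr.refl b) (hr.symm hac)
  rw [inf_eq_left_of_rel hinf hbc, inf_eq_right_of_rel hinf hab] at h
  exact hr.trans h hac

theorem projDown_eq_of_rel [Std.Antisymm le] (hr : Equivalence r) {projDown : α → α}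
    (hpd : ∀ w, r (projDown w) w ∧ ∀ u, r u w → le (projDown w) u) {x y : α} (h : r x y) :
    projDown x = projDown y :=
  antisymm ((hpd x).2 _ (hr.trans (hpd y).1 (hr.symm h))) ((hpd y).2 _ (hr.trans (hpd x).1 h))

end SemilatticeCongruence

def stackSort {W : Type*} [Group W] (projDown : W → W) (u : W) : W := u * (projDown u)⁻¹

namespace CoxeterSystem

variable {B W : Type*} [Group W] {M : CoxeterMatrix B} (cs : CoxeterSystem M W)

def LeftWeakLE (x y : W) : Prop := cs.length (y * x⁻¹) + cs.length x = cs.length y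

instance : Std.Refl cs.LeftWeakLE := ⟨fun x => by simp [LeftWeakLE]⟩

instance : Std.Antisymm cs.LeftWeakLE := ⟨fun x y hxy hyx => by
  have h : cs.length (y * x⁻¹) = 0 := by unfold LeftWeakLE at hxy hyx; omega
  exact (mul_inv_eq_one.mp (cs.length_eq_zero_iff.mp h)).symm⟩

variable {cs}

theorem simple_mul_leftWeakLE_iff {u : W} {i : B} :
    cs.LeftWeakLE (cs.simple i * u) u ↔ cs.IsLeftDescent u i := by
  rw [LeftWeakLE, isLeftDescent_iff, mul_inv_rev, inv_simple, mul_inv_cancel_left, length_simple,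
    add_comm]

theorem LeftWeakLE.simple_mul {p u : W} {i : B} (hpu : cs.LeftWeakLE p u)
    (hi : cs.IsLeftDescent (u * p⁻¹) i) :
    cs.LeftWeakLE p (cs.simple i * u) ∧ cs.LeftWeakLE (cs.simple i * u) u := by
  rw [isLeftDescent_iff] at hi
  unfold LeftWeakLE at hpu
  have hle : cs.length (cs.simple i * u) ≤ cs.length (cs.simple i * (u * p⁻¹)) + cs.length p := by
    simpa [mul_assoc] using cs.length_mul_le (cs.simple i * (u * p⁻¹)) p
  have hsu : cs.length (cs.simple i * u) + 1 = cs.length u := by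
    rcases cs.length_simple_mul u i with h | h <;> omega
  refine ⟨?_, simple_mul_leftWeakLE_iff.mpr (cs.isLeftDescent_iff.mpr hsu)⟩
  unfold LeftWeakLE
  rw [mul_assoc]
  omega

theorem LeftWeakLE.induction {v : W} {P : W → Prop} (base : P v)
    (step : ∀ w i, cs.IsLeftDescent w i → P (cs.simple i * w) → P w) {w : W}
    (hvw : cs.LeftWeakLE v w) : P w := by
  induction h : cs.length w using Nat.strong_induction_on generalizing w with
  | _ n ih =>
  by_cases hwv : w = v
  · exact hwv ▸ base
  obtain ⟨i, hi⟩ := cs.exists_leftDescent_of_ne_one (mul_inv_eq_one.not.mpr hwv)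
  obtain ⟨hv, hw⟩ := hvw.simple_mul hi
  have hdesc := simple_mul_leftWeakLE_iff.mp hw
  exact step w i hdesc (ih _ (h ▸ hdesc) hv rfl)

theorem exists_injective_fiber_of_leftWeakLE {S : W → W}
    (hS : ∀ u i, cs.IsLeftDescent (S u) i → S (cs.simple i * u) = cs.simple i * S u)
    {v w : W} (hvw : cs.LeftWeakLE v w) :
    ∃ f : {u // S u = w} → {u // S u = v}, Function.Injective f := by
  refine LeftWeakLE.induction
    (P := fun w => ∃ f : {u // S u = w} → {u // S u = v}, Function.Injective f) ⟨id, Function.injective_id⟩ (fun w i hi ih => ?_) hvw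
  obtain ⟨f, hf⟩ := ih
  refine ⟨fun u => f ⟨cs.simple i * u, by rw [hS u i (u.2.symm ▸ hi), u.2]⟩, fun a b hab => ?_⟩
  exact Subtype.ext (mul_left_cancel (congrArg Subtype.val (hf hab)))

theorem stackSort_simple_mul {inf : W → W → W}
    (hinf : ∀ x y, cs.LeftWeakLE (inf x y) x ∧ cs.LeftWeakLE (inf x y) y ∧
      ∀ z, cs.LeftWeakLE z x → cs.LeftWeakLE z y → cs.LeftWeakLE z (inf x y))
    {r : W → W → Prop} (hr : Equivalence r)
    (hcong : ∀ x1 x2 y1 y2, r x1 x2 → r y1 y2 → r (inf x1 y1) (inf x2 y2))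
    {projDown : W → W} (hpd : ∀ w, r (projDown w) w ∧ ∀ u, r u w → cs.LeftWeakLE (projDown w) u)
    {u : W} {i : B} (hi : cs.IsLeftDescent (stackSort projDown u) i) :
    stackSort projDown (cs.simple i * u) = cs.simple i * stackSort projDown u := by
  obtain ⟨hp, hsu⟩ := ((hpd u).2 u (hr.refl u)).simple_mul hi
  have hrel : r (cs.simple i * u) u := rel_of_le_of_le hinf hr hcong hp hsu (hpd u).1
  rw [stackSort, stackSort, projDown_eq_of_rel hr hpd hrel, mul_assoc]

end CoxeterSystem

open CoxeterSystem in
theorem stmt_6_general {B W : Type*} [Group W] {M : CoxeterMatrix B} (cs : CoxeterSystem M W)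
    (lL : W → W → Prop) (hlL : ∀ x y, lL x y ↔ cs.length (y * x⁻¹) + cs.length x = cs.length y)
    (inf : W → W → W)
    (hinf : ∀ x y, lL (inf x y) x ∧ lL (inf x y) y ∧ ∀ z, lL z x → lL z y → lL z (inf x y))
    (r : W → W → Prop) (hequiv : Equivalence r)
    (hcong : ∀ x1 x2 y1 y2, r x1 x2 → r y1 y2 → r (inf x1 y1) (inf x2 y2))
    (pd : W → W) (hpd : ∀ w, r (pd w) w ∧ ∀ u, r u w → lL (pd w) u)
    (v w : W) :
    (lL v w →
      ∃ f : {u : W // u * (pd u)⁻¹ = w} → {u : W // u * (pd u)⁻¹ = v}, Function.Injective f) ∧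
    (∀ i : B, w = cs.simple i * v → cs.length w = cs.length v + 1 →
      ∀ u : W, u * (pd u)⁻¹ = w → (cs.simple i * u) * (pd (cs.simple i * u))⁻¹ = v) := by
  obtain rfl : lL = cs.LeftWeakLE := funext₂ fun x y => propext (hlL x y)
  have hS : ∀ u i, cs.IsLeftDescent (stackSort pd u) i →
      stackSort pd (cs.simple i * u) = cs.simple i * stackSort pd u :=
    fun _ _ => stackSort_simple_mul hinf hequiv hcong hpd
  refine ⟨exists_injective_fiber_of_leftWeakLE hS, fun i hwv hlen u hu => ?_⟩
  have hi : cs.IsLeftDescent w i := by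
    rw [isLeftDescent_iff, hlen, hwv, simple_mul_simple_cancel_left]
  change stackSort pd u = w at hu
  change stackSort pd (cs.simple i * u) = v
  rw [hS u i (hu ▸ hi), hu, hwv, simple_mul_simple_cancel_left]

/-- If `v ≤_L w`, then `|S_≡⁻¹(v)| ≥ |S_≡⁻¹(w)|`: there is an injection from
the preimage set of `w` into that of `v`; moreover if `w = s v` covers `v`, the injection is
given by `u ↦ s u`. -/
theorem stmt_6 {B W : Type*} [Group W] {M : CoxeterMatrix B} (cs : CoxeterSystem M W)
    (lL : W → W → Prop) (hlL : ∀ x y, lL x y ↔ cs.length (y * x⁻¹) + cs.length x = cs.length y)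
    (inf : W → W → W)
    (hinf : ∀ x y, lL (inf x y) x ∧ lL (inf x y) y ∧ ∀ z, lL z x → lL z y → lL z (inf x y))
    (r : W → W → Prop) (hequiv : Equivalence r)
    (hcong : ∀ x1 x2 y1 y2, r x1 x2 → r y1 y2 → r (inf x1 y1) (inf x2 y2))
    (hess : ∀ x, r x 1 → x = 1)
    (pd : W → W) (hpd : ∀ w, r (pd w) w ∧ ∀ u, r u w → lL (pd w) u)
    (v w : W) :
    (lL v w →
      ∃ f : {u : W // u * (pd u)⁻¹ = w} → {u : W // u * (pd u)⁻¹ = v}, Function.Injective f) ∧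
    (∀ i : B, w = cs.simple i * v → cs.length w = cs.length v + 1 →
      ∀ u : W, u * (pd u)⁻¹ = w → (cs.simple i * u) * (pd (cs.simple i * u))⁻¹ = v) :=
  stmt_6_general cs lL hlL inf hinf r hequiv hcong pd hpd v w
end

section
/- Let W be a Coxeter group and ≡ an essential semilattice congruence on the left weak order of W. If u, w ∈ W satisfy S_≡(u) = sv where v ∈ W, s is a simple generator with ℓ(sv) = ℓ(v)+1, then S_≡(su) = v and π_↓(su) = π_↓(u). -/
/-- If `S_≡(u) = s v` with `ℓ(s v) = ℓ(v) + 1`, then `S_≡(s u) = v` and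
`π_↓(s u) = π_↓(u)`. -/
theorem stmt_7 {B W : Type*} [Group W] {M : CoxeterMatrix B} (cs : CoxeterSystem M W)
    (lL : W → W → Prop) (hlL : ∀ x y, lL x y ↔ cs.length (y * x⁻¹) + cs.length x = cs.length y)
    (inf : W → W → W)
    (hinf : ∀ x y, lL (inf x y) x ∧ lL (inf x y) y ∧ ∀ z, lL z x → lL z y → lL z (inf x y))
    (r : W → W → Prop) (hequiv : Equivalence r)
    (hcong : ∀ x1 x2 y1 y2, r x1 x2 → r y1 y2 → r (inf x1 y1) (inf x2 y2))
    (hess : ∀ x, r x 1 → x = 1)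
    (pd : W → W) (hpd : ∀ w, r (pd w) w ∧ ∀ u', r u' w → lL (pd w) u')
    (u v : W) (i : B)
    (h1 : u * (pd u)⁻¹ = cs.simple i * v)
    (h2 : cs.length (cs.simple i * v) = cs.length v + 1) :
    (cs.simple i * u) * (pd (cs.simple i * u))⁻¹ = v ∧ pd (cs.simple i * u) = pd u := by
  set s := cs.simple i with hs
  set p := pd u with hp
  -- basic order facts
  have lL_refl : ∀ x, lL x x := by
    intro x
    rw [hlL, mul_inv_cancel, cs.length_one, zero_add]
  have lL_antisymm : ∀ x y, lL x y → lL y x → x = y := by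
    intro x y hxy hyx
    rw [hlL] at hxy hyx
    have h0 : cs.length (y * x⁻¹) = 0 := by omega
    have := cs.length_eq_zero_iff.mp h0
    have : y = x := by
      have := mul_inv_eq_one.mp this
      exact this
    exact this.symm
  -- p ≤ u
  have lLpu : lL p u := (hpd u).2 u (hequiv.refl u)
  have hlen_pu : cs.length (u * p⁻¹) + cs.length p = cs.length u := (hlL p u).mp lLpu
  have hlen_u : cs.length v + 1 + cs.length p = cs.length u := by
    rw [h1, h2] at hlen_pu; omega
  -- s u * p⁻¹ = v
  have hsup : (s * u) * p⁻¹ = v := by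
    rw [mul_assoc, h1, hs, cs.simple_mul_simple_cancel_left]
  -- ℓ(s u) = ℓ u - 1
  have hlen_su : cs.length (s * u) + 1 = cs.length u := by
    have hle : cs.length (s * u) ≤ cs.length v + cs.length p := by
      have : s * u = v * p := by
        rw [← hsup]; group
      rw [this]
      exact cs.length_mul_le v p
    rcases cs.length_simple_mul u i with h | h
    · rw [← hs] at h; omega
    · rw [← hs] at h; omega
  -- p ≤ s u
  have lLpsu : lL p (s * u) := by
    rw [hlL, hsup]; omega
  -- s u ≤ u
  have lLsuu : lL (s * u) u := by
    rw [hlL]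
    have : u * (s * u)⁻¹ = s := by
      rw [mul_inv_rev, ← mul_assoc, mul_inv_cancel, one_mul, hs, cs.inv_simple]
    have hls : cs.length s = 1 := by rw [hs]; exact cs.length_simple i
    rw [this, hls]
    omega
  -- inf u (s u) = s u
  have hinf1 : inf u (s * u) = s * u := by
    refine lL_antisymm _ _ (hinf u (s * u)).2.1 ?_
    exact (hinf u (s * u)).2.2 (s * u) lLsuu (lL_refl _)
  -- inf p (s u) = p
  have hinf2 : inf p (s * u) = p := by
    refine lL_antisymm _ _ (hinf p (s * u)).1 ?_
    exact (hinf p (s * u)).2.2 p (lL_refl p) lLpsu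
  -- s u ≡ p
  have hrsup : r (s * u) p := by
    have := hcong u p (s * u) (s * u) (hequiv.symm (hpd u).1) (hequiv.refl (s * u))
    rwa [hinf1, hinf2] at this
  -- pd (s u) = p
  have hpdsu : pd (s * u) = p := by
    refine lL_antisymm _ _ ?_ ?_
    · exact (hpd (s * u)).2 p (hequiv.symm hrsup)
    · refine (hpd u).2 _ ?_
      exact hequiv.trans (hpd (s * u)).1 (hequiv.trans hrsup (hpd u).1)
  refine ⟨?_, hpdsu⟩
  rw [hpdsu, hsup]
end

section
/- For each n ≥ 2, there exist a permutation w ∈ S_n and an essential semilattice congruence ≡ on the left weak order of S_n such that S_≡(w) has exactly n − 2 right descents. Explicitly, with k = ⌈n/2⌉, let u ∈ S_n be defined by u(i) = (i+1)/2 for i odd and u(i) = k + i/2 for i even, and v ∈ S_n by v(i) = k − (i−1)/2 for i odd and v(i) = n + 1 − i/2 for i even; then u ≤_L v, u and v have the same descent set, and vu⁻¹ is the permutation k(k−1)⋯21 n(n−1)⋯(k+1), which has n − 2 descents. -/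
/-!
The left weak order on `S_n` is a meet-semilattice: the non-inversions of `x ⊓ y` are the
transitive closure of the union of the non-inversions of `x` and of `y`. Since `i` is a descent of
`x` exactly when `s_i ≤ x`, the map `x ↦ (u ⊓ x, Des x)` is an inf-homomorphism, and its kernel is
a semilattice congruence; it is essential because only the identity has no descents. Each class is
finite and closed under meets, hence has a least element. For the two riffle shuffles `u ≤ v` with
`Des u = Des v`, the least element of the class of `v` is `u`, and `v u⁻¹ = k⋯1 n⋯(k+1)` has a
descent at every position except `k` and `n`.
-/

open Equiv

lemma exists_equiv_fin_lt_iff {α : Type*} [Fintype α] {m : ℕ} (hα : Fintype.card α = m)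
    (r : α → α → Prop) [IsStrictTotalOrder α r] : ∃ e : α ≃ Fin m, ∀ a b, e a < e b ↔ r a b := by
  classical
  let := linearOrderOfSTO r
  exact ⟨(Fintype.orderIsoFinOfCardEq α hα).symm.toEquiv,
    fun _ _ => (Fintype.orderIsoFinOfCardEq α hα).symm.lt_iff_lt⟩

lemma Equiv.Perm.eq_one_of_strictMono {n : ℕ} {x : Perm (Fin n)} (hx : StrictMono x) : x = 1 :=
  Equiv.ext fun i => congrArg (· i)
    (Subsingleton.elim (hx.orderIsoOfSurjective x x.surjective) (OrderIso.refl _))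

lemma InfClosed.exists_isLeast {α : Type*} [SemilatticeInf α] [Finite α] {s : Set α}
    (hs : InfClosed s) (hne : s.Nonempty) : ∃ m, IsLeast s m := by
  obtain ⟨m, hm⟩ := exists_minimal_of_wellFoundedLT (· ∈ s) hne
  exact ⟨m, hm.prop, fun b hb => hm.eq_of_le (hs hm.prop hb) inf_le_left ▸ inf_le_right⟩

lemma InfHom.exists_isLeast_fiber {α β : Type*} [SemilatticeInf α] [Finite α] [SemilatticeInf β]
    (f : InfHom α β) (a : α) : ∃ m, IsLeast {b | f b = f a} m :=
  (infClosed_singleton.preimage f).exists_isLeast ⟨a, rfl⟩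

namespace LeftWeakOrder

variable {n : ℕ}

def JointNonInv (x y : Perm (Fin n)) (i j : Fin n) : Prop :=
  i < j ∧ (x i < x j ∨ y i < y j)

def MeetNonInv (x y : Perm (Fin n)) : Fin n → Fin n → Prop :=
  Relation.TransGen (JointNonInv x y)

variable {x y : Perm (Fin n)} {i j m : Fin n}

lemma JointNonInv.split (h : JointNonInv x y i j) (him : i < m) (hmj : m < j) :
    JointNonInv x y i m ∨ JointNonInv x y m j := by
  rcases h.2 with h' | h'
  · rcases lt_or_ge (x i) (x m) with hh | hh
    · exact Or.inl ⟨him, Or.inl hh⟩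
    · exact Or.inr ⟨hmj, Or.inl (hh.trans_lt h')⟩
  · rcases lt_or_ge (y i) (y m) with hh | hh
    · exact Or.inl ⟨him, Or.inr hh⟩
    · exact Or.inr ⟨hmj, Or.inr (hh.trans_lt h')⟩

lemma MeetNonInv.split (h : MeetNonInv x y i j) (him : i < m) (hmj : m < j) :
    MeetNonInv x y i m ∨ MeetNonInv x y m j := by
  induction h generalizing m with
  | single h => exact (h.split him hmj).imp .single .single
  | @tail b c hib hbc ih =>
    rcases lt_trichotomy m b with hmb | rfl | hbm
    · exact (ih him hmb).imp_right (·.tail hbc)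
    · exact Or.inl hib
    · exact (hbc.split hbm hmj).imp hib.tail .single

-- The order of positions by their values under `x ⊓ y`; `MeetNonInv.split` (co-transitivity) is
-- what makes it transitive.
def meetOrder (x y : Perm (Fin n)) (a b : Fin n) : Prop :=
  (a < b ∧ MeetNonInv x y a b) ∨ (b < a ∧ ¬ MeetNonInv x y b a)

instance (x y : Perm (Fin n)) : IsStrictTotalOrder (Fin n) (meetOrder x y) where
  irrefl a := by rintro (⟨h, -⟩ | ⟨h, -⟩) <;> exact lt_irrefl a h
  trichotomous a b hab hba := by
    by_contra hne
    rcases lt_or_gt_of_ne hne with h | h <;> unfold meetOrder at * <;> tauto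
  trans a b c hab hbc := by
    rcases hab with ⟨hab, tab⟩ | ⟨hba, tab⟩ <;> rcases hbc with ⟨hbc, tbc⟩ | ⟨hcb, tbc⟩
    · exact Or.inl ⟨hab.trans hbc, tab.trans tbc⟩
    · rcases lt_trichotomy a c with hac | rfl | hca
      · exact Or.inl ⟨hac, (tab.split hac hcb).resolve_right tbc⟩
      · exact absurd tab tbc
      · exact Or.inr ⟨hca, fun tca => tbc (tca.trans tab)⟩
    · rcases lt_trichotomy a c with hac | rfl | hca
      · exact Or.inl ⟨hac, (tbc.split hba hac).resolve_left tab⟩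
      · exact absurd tbc tab
      · exact Or.inr ⟨hca, fun tca => tab (tbc.trans tca)⟩
    · exact Or.inr ⟨hcb.trans hba, fun tca => (tca.split hcb hba).elim tbc tab⟩

noncomputable def weakInf (x y : Perm (Fin n)) : Perm (Fin n) :=
  (exists_equiv_fin_lt_iff (Fintype.card_fin n) (meetOrder x y)).choose

lemma weakInf_lt_weakInf_iff (hij : i < j) :
    weakInf x y j < weakInf x y i ↔ ¬ MeetNonInv x y i j := by
  rw [weakInf, (exists_equiv_fin_lt_iff (Fintype.card_fin n) (meetOrder x y)).choose_spec,
    meetOrder]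
  simp [hij, hij.not_gt]

lemma lt_of_meetNonInv {z : Perm (Fin n)}
    (hzx : ∀ i j : Fin n, i < j → z j < z i → x j < x i)
    (hzy : ∀ i j : Fin n, i < j → z j < z i → y j < y i) (h : MeetNonInv x y i j) : z i < z j := by
  have step : ∀ {p q}, JointNonInv x y p q → z p < z q := fun {p q} hpq => by
    by_contra hzqp
    have hz := lt_of_le_of_ne (not_lt.1 hzqp) (z.injective.ne hpq.1.ne')
    rcases hpq.2 with h' | h'
    · exact (hzx p q hpq.1 hz).not_gt h'
    · exact (hzy p q hpq.1 hz).not_gt h'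
  exact Relation.TransGen.trans_induction_on h step fun _ _ => lt_trans

lemma lt_of_not_jointNonInv_left (hij : i < j) (h : ¬ JointNonInv x y i j) : x j < x i :=
  lt_of_le_of_ne (not_lt.1 fun h' => h ⟨hij, .inl h'⟩) (x.injective.ne hij.ne')

lemma lt_of_not_jointNonInv_right (hij : i < j) (h : ¬ JointNonInv x y i j) : y j < y i :=
  lt_of_le_of_ne (not_lt.1 fun h' => h ⟨hij, .inr h'⟩) (y.injective.ne hij.ne')

lemma eq_of_inversions_subset {a b : Perm (Fin n)}
    (hab : ∀ i j : Fin n, i < j → a j < a i → b j < b i)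
    (hba : ∀ i j : Fin n, i < j → b j < b i → a j < a i) : a = b := by
  suffices StrictMono (b * a⁻¹) by
    simpa [mul_inv_eq_one, eq_comm] using Perm.eq_one_of_strictMono this
  intro p q hpq
  obtain ⟨i, rfl⟩ := a.surjective p
  obtain ⟨j, rfl⟩ := a.surjective q
  simp only [Perm.mul_apply, Perm.coe_inv, symm_apply_apply] at hpq ⊢
  have hne : i ≠ j := fun h => hpq.ne (congrArg a h)
  rcases lt_or_gt_of_ne hne with hij | hji
  · exact lt_of_le_of_ne (not_lt.1 fun h => (hba i j hij h).not_gt hpq) (b.injective.ne hne)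
  · exact hab j i hji hpq

noncomputable abbrev semilatticeInf : SemilatticeInf (Perm (Fin n)) where
  le a b := ∀ i j : Fin n, i < j → a j < a i → b j < b i
  le_refl _ _ _ _ h := h
  le_trans _ _ _ hab hbc i j hij h := hbc i j hij (hab i j hij h)
  le_antisymm _ _ := eq_of_inversions_subset
  inf := weakInf
  inf_le_left _ _ i j hij h := lt_of_not_jointNonInv_left hij fun h' =>
    (weakInf_lt_weakInf_iff hij).1 h (.single h')
  inf_le_right _ _ i j hij h := lt_of_not_jointNonInv_right hij fun h' =>
    (weakInf_lt_weakInf_iff hij).1 h (.single h')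
  le_inf _ _ _ hzx hzy i j hij h := (weakInf_lt_weakInf_iff hij).2 fun h' =>
    (lt_of_meetNonInv hzx hzy h').not_gt h

end LeftWeakOrder

attribute [local instance] LeftWeakOrder.semilatticeInf

namespace LeftWeakOrder

variable {n : ℕ} {x : Perm (Fin n)} {i j : Fin n}

lemma swap_le_iff (hij : (j : ℕ) = i + 1) : swap i j ≤ x ↔ x j < x i := by
  have hlt : i < j := by rw [Fin.lt_def]; omega
  refine ⟨fun h => h i j hlt (by simpa using hlt), fun h p q hpq hswap => ?_⟩
  obtain ⟨rfl, rfl⟩ : p = i ∧ q = j := by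
    rw [swap_apply_def, swap_apply_def] at hswap
    simp only [Fin.lt_def, Fin.ext_iff] at hpq hswap ⊢
    split_ifs at hswap <;> omega
  exact h

def descents (x : Perm (Fin n)) : Set (Fin n) :=
  {i | ∃ j : Fin n, (j : ℕ) = i + 1 ∧ x j < x i}

lemma descents_inf (x y : Perm (Fin n)) : descents (x ⊓ y) = descents x ∩ descents y := by
  ext i
  simp only [descents, Set.mem_ofPred_eq, Set.mem_inter_iff]
  constructor
  · rintro ⟨j, hj, h⟩
    rw [← swap_le_iff hj, le_inf_iff, swap_le_iff hj, swap_le_iff hj] at h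
    exact ⟨⟨j, hj, h.1⟩, ⟨j, hj, h.2⟩⟩
  · rintro ⟨⟨j, hj, hx⟩, ⟨j', hj', hy⟩⟩
    obtain rfl : j' = j := Fin.ext (hj'.trans hj.symm)
    rw [← swap_le_iff hj] at hx hy
    exact ⟨_, hj, (swap_le_iff hj).1 (le_inf hx hy)⟩

lemma descents_one : descents (1 : Perm (Fin n)) = ∅ := by
  ext i
  simp only [descents, Perm.one_apply, Fin.lt_def, Set.mem_ofPred_eq, Set.mem_empty_iff_false,
    iff_false, not_exists, not_and]
  omega

lemma eq_one_of_descents_eq_empty (h : descents x = ∅) : x = 1 := by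
  cases n with
  | zero => exact Subsingleton.elim x 1
  | succ n =>
    refine Perm.eq_one_of_strictMono (Fin.strictMono_iff_lt_succ.2 fun i => ?_)
    refine lt_of_le_of_ne (not_lt.1 fun hi => ?_) (x.injective.ne Fin.castSucc_lt_succ.ne)
    exact (Set.eq_empty_iff_forall_notMem.1 h i.castSucc) ⟨i.succ, by simp, hi⟩

noncomputable def infDescentsHom (u : Perm (Fin n)) :
    InfHom (Perm (Fin n)) (Perm (Fin n) × Set (Fin n)) where
  toFun x := (u ⊓ x, descents x)
  map_inf' x y := Prod.ext (inf_inf_distrib_left u x y) (descents_inf x y)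

lemma isLeast_fiber_infDescentsHom {u v : Perm (Fin n)} (huv : u ≤ v)
    (hdes : descents u = descents v) :
    IsLeast {y | infDescentsHom u y = infDescentsHom u v} u := by
  refine ⟨Prod.ext (by simp [infDescentsHom, inf_eq_left.2 huv]) hdes, fun y hy => ?_⟩
  have : u ⊓ y = u ⊓ v := congrArg Prod.fst hy
  rwa [inf_eq_left.2 huv, inf_eq_left] at this

variable {k : ℕ} {u v : Perm (Fin n)}

-- `u = 1 (k+1) 2 (k+2) ⋯` and `v = k n (k-1) (n-1) ⋯`, with `0`-indexed positions and
-- `1`-indexed values.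
def IsRiffle (k : ℕ) (u : Perm (Fin n)) : Prop :=
  ∀ i : Fin n, (u i : ℕ) + 1 =
    if ((i : ℕ) + 1) % 2 = 1 then ((i : ℕ) + 2) / 2 else k + ((i : ℕ) + 1) / 2

def IsReversedRiffle (k : ℕ) (v : Perm (Fin n)) : Prop :=
  ∀ i : Fin n, (v i : ℕ) + 1 =
    if ((i : ℕ) + 1) % 2 = 1 then k - (i : ℕ) / 2 else n + 1 - ((i : ℕ) + 1) / 2

def IsBlockReversal (k : ℕ) (σ : Perm (Fin n)) : Prop :=
  ∀ p : Fin n, (σ p : ℕ) + 1 = if (p : ℕ) + 1 ≤ k then k - (p : ℕ) else n + k - (p : ℕ)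

lemma parity_cases_of_eq_ite {a i b c : ℕ} (h : a + 1 = if (i + 1) % 2 = 1 then b else c) :
    (i % 2 = 0 ∧ a + 1 = b) ∨ (i % 2 = 1 ∧ a + 1 = c) := by
  split_ifs at h <;> omega

lemma le_of_isRiffle (hu : IsRiffle k u) (hv : IsReversedRiffle k v) : u ≤ v := by
  intro i j hij h
  rw [Fin.lt_def] at hij h ⊢
  rcases parity_cases_of_eq_ite (hu i) with hui | hui <;>
  rcases parity_cases_of_eq_ite (hu j) with huj | huj <;>
  rcases parity_cases_of_eq_ite (hv i) with hvi | hvi <;>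
  rcases parity_cases_of_eq_ite (hv j) with hvj | hvj <;> omega

lemma descent_iff_of_isRiffle (hu : IsRiffle k u) (hv : IsReversedRiffle k v) {i j : Fin n}
    (hij : (j : ℕ) = i + 1) : u j < u i ↔ v j < v i := by
  rw [Fin.lt_def, Fin.lt_def]
  rcases parity_cases_of_eq_ite (hu i) with hui | hui <;>
  rcases parity_cases_of_eq_ite (hu j) with huj | huj <;>
  rcases parity_cases_of_eq_ite (hv i) with hvi | hvi <;>
  rcases parity_cases_of_eq_ite (hv j) with hvj | hvj <;> omega

lemma isBlockReversal_mul_inv (hu : IsRiffle k u) (hv : IsReversedRiffle k v) :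
    IsBlockReversal k (v * u⁻¹) := by
  intro p
  obtain ⟨i, rfl⟩ := u.surjective p
  simp only [Perm.mul_apply, Perm.coe_inv, symm_apply_apply]
  rcases parity_cases_of_eq_ite (hu i) with hui | hui <;>
  rcases parity_cases_of_eq_ite (hv i) with hvi | hvi <;> split_ifs <;> omega

lemma descents_of_isBlockReversal {σ : Perm (Fin n)} (hσ : IsBlockReversal k σ) :
    descents σ = {i : Fin n | (i : ℕ) + 1 < n ∧ (i : ℕ) + 1 ≠ k} := by
  ext i
  simp only [descents, Set.mem_ofPred_eq, Fin.lt_def]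
  have hi := hσ i
  constructor
  · rintro ⟨j, hj, hlt⟩
    have hj' := hσ j
    have := j.isLt
    split_ifs at hi hj' <;> omega
  · rintro ⟨hin, hik⟩
    have hj := hσ ⟨i + 1, hin⟩
    exact ⟨⟨i + 1, hin⟩, rfl, by split_ifs at hi hj <;> simp only at hj ⊢ <;> omega⟩

lemma ncard_descents_of_isBlockReversal {σ : Perm (Fin n)} (hk : 0 < k) (hkn : k < n)
    (hσ : IsBlockReversal k σ) :
    (descents σ).ncard = n - 2 := by
  rw [descents_of_isBlockReversal hσ, ← Set.ncard_image_of_injective _ Fin.val_injective]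
  have : Fin.val '' {i : Fin n | (i : ℕ) + 1 < n ∧ (i : ℕ) + 1 ≠ k} =
      ↑((Finset.range (n - 1)).erase (k - 1)) := by
    ext m
    simp only [Set.mem_image, Set.mem_ofPred_eq, Finset.coe_erase, Finset.coe_range,
      Set.mem_sdiff, Set.mem_Iio, Set.mem_singleton_iff]
    exact ⟨fun ⟨i, hi, him⟩ => by omega, fun hm => ⟨⟨m, by omega⟩, by simp only; omega, rfl⟩⟩
  rw [this, Set.ncard_coe_finset, Finset.card_erase_of_mem (by simp; omega), Finset.card_range]
  omega

end LeftWeakOrder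

open LeftWeakOrder

/-- For each `n ≥ 2` there are a permutation `w ∈ S_n` and an essential
semilattice congruence `≡` on the left weak order of `S_n` such that `S_≡(w)` has exactly
`n - 2` descents.  Explicitly, with `k = ⌈n/2⌉` and `u, v` given by the stated formulas,
`u ≤_L v`, `u` and `v` have the same descent set, and `v * u⁻¹` is the permutation
`k(k-1)⋯21 n(n-1)⋯(k+1)`, which has `n - 2` descents. -/
theorem stmt_8 (n : ℕ) (hn : 2 ≤ n) (k : ℕ) (hk : k = (n + 1) / 2)
    -- the left weak order on `S_n`, via containment of right inversion sets
    (lL : Equiv.Perm (Fin n) → Equiv.Perm (Fin n) → Prop)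
    (hlL : ∀ a b, lL a b ↔ ∀ i j : Fin n, i < j → a j < a i → b j < b i)
    (u v : Equiv.Perm (Fin n))
    (hu : ∀ i : Fin n, ((u i : ℕ) + 1) =
      if ((i : ℕ) + 1) % 2 = 1 then ((i : ℕ) + 2) / 2 else k + ((i : ℕ) + 1) / 2)
    (hv : ∀ i : Fin n, ((v i : ℕ) + 1) =
      if ((i : ℕ) + 1) % 2 = 1 then k - (i : ℕ) / 2 else n + 1 - ((i : ℕ) + 1) / 2) :
    -- `u ≤_L v`
    lL u v ∧
    -- `u` and `v` have the same descent set
    (∀ i j : Fin n, (j : ℕ) = (i : ℕ) + 1 → (u j < u i ↔ v j < v i)) ∧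
    -- `v * u⁻¹` is the explicit permutation `k(k-1)⋯21 n(n-1)⋯(k+1)`
    (∀ p : Fin n, (((v * u⁻¹) p : ℕ) + 1) =
      if (p : ℕ) + 1 ≤ k then k - (p : ℕ) else n + k - (p : ℕ)) ∧
    -- the main claim: a permutation `w` and an essential semilattice congruence `r`
    -- whose stack-sorting operator sends `w` to a permutation with `n - 2` descents
    (∃ (r : Equiv.Perm (Fin n) → Equiv.Perm (Fin n) → Prop)
       (inf : Equiv.Perm (Fin n) → Equiv.Perm (Fin n) → Equiv.Perm (Fin n))
       (pd : Equiv.Perm (Fin n) → Equiv.Perm (Fin n)) (w : Equiv.Perm (Fin n)),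
      Equivalence r ∧
      (∀ x y, lL (inf x y) x ∧ lL (inf x y) y ∧ ∀ z, lL z x → lL z y → lL z (inf x y)) ∧
      (∀ x1 x2 y1 y2, r x1 x2 → r y1 y2 → r (inf x1 y1) (inf x2 y2)) ∧
      (∀ x, r x 1 → x = 1) ∧
      (∀ x, r (pd x) x ∧ ∀ y, r y x → lL (pd x) y) ∧
      Set.ncard {i : Fin n | ∃ j : Fin n, (j : ℕ) = (i : ℕ) + 1 ∧
        (w * (pd w)⁻¹) j < (w * (pd w)⁻¹) i} = n - 2) := by
  obtain rfl : lL = (· ≤ ·) := funext₂ fun a b => propext (hlL a b)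
  have huv : u ≤ v := le_of_isRiffle hu hv
  have hdes : descents u = descents v := by
    ext i
    exact exists_congr fun j => and_congr_right fun hj => descent_iff_of_isRiffle hu hv hj
  let f := infDescentsHom u
  choose pd hpd using f.exists_isLeast_fiber
  refine ⟨huv, fun i j => descent_iff_of_isRiffle hu hv, isBlockReversal_mul_inv hu hv,
    fun x y => f x = f y, (· ⊓ ·), pd, v, ⟨fun _ => rfl, Eq.symm, Eq.trans⟩,
    fun x y => ⟨inf_le_left, inf_le_right, fun z => le_inf⟩, ?_, ?_, hpd, ?_⟩
  · intro x₁ x₂ y₁ y₂ hx hy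
    simp only [map_inf, hx, hy]
  · intro x hx
    exact eq_one_of_descents_eq_empty ((congrArg Prod.snd hx).trans descents_one)
  · rw [(hpd v).unique (isLeast_fiber_infDescentsHom huv hdes)]
    exact ncard_descents_of_isBlockReversal (by omega) (by omega) (isBlockReversal_mul_inv hu hv)
end

section
/- No Coxeter stack-sorting operator on S_n has the decreasing permutation n(n−1)⋯321 in its image; that is, for every essential semilattice congruence ≡ on the left weak order of S_n and every w ∈ S_n, S_≡(w) ≠ w₀ where w₀ is the longest element (for n ≥ 2). -/
/-- A strictly monotone permutation of `Fin n` is the identity. -/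
lemma strictMono_perm_eq_one {n : ℕ} (u : Equiv.Perm (Fin n))
    (h : StrictMono (u : Fin n → Fin n)) : u = 1 := by
  have : (⟨u, fun {a b} => h.le_iff_le⟩ : Fin n ≃o Fin n) =
      (OrderIso.refl (Fin n)) := Subsingleton.elim _ _
  ext i
  have := congrArg (fun (f : Fin n ≃o Fin n) => f i) this
  simp at this
  simp [this]

/-- For `n ≥ 2`, the decreasing permutation `w₀ = n(n-1)⋯1` is not in the
image of any Coxeter stack-sorting operator on `S_n`. -/
theorem stmt_9 (n : ℕ) (hn : 2 ≤ n)
    -- the left weak order on `S_n`, via containment of right inversion sets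
    (lL : Equiv.Perm (Fin n) → Equiv.Perm (Fin n) → Prop)
    (hlL : ∀ a b, lL a b ↔ ∀ i j : Fin n, i < j → a j < a i → b j < b i)
    -- meets for the left weak order
    (inf : Equiv.Perm (Fin n) → Equiv.Perm (Fin n) → Equiv.Perm (Fin n))
    (hinf : ∀ x y, lL (inf x y) x ∧ lL (inf x y) y ∧ ∀ z, lL z x → lL z y → lL z (inf x y))
    -- an essential semilattice congruence
    (r : Equiv.Perm (Fin n) → Equiv.Perm (Fin n) → Prop) (hequiv : Equivalence r)
    (hcong : ∀ x1 x2 y1 y2, r x1 x2 → r y1 y2 → r (inf x1 y1) (inf x2 y2))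
    (hess : ∀ x, r x 1 → x = 1)
    -- the downward projection map
    (pd : Equiv.Perm (Fin n) → Equiv.Perm (Fin n))
    (hpd : ∀ w, r (pd w) w ∧ ∀ y, r y w → lL (pd w) y)
    -- the longest element
    (w0 : Equiv.Perm (Fin n)) (hw0 : ∀ i : Fin n, (w0 i : ℕ) = n - 1 - (i : ℕ)) :
    ∀ w : Equiv.Perm (Fin n), w * (pd w)⁻¹ ≠ w0 := by
  intro w hw
  set u := pd w with hu
  have hwu : w = w0 * u := by
    have := congrArg (fun x => x * u) hw
    simpa [mul_assoc] using this
  -- pd w ≤_L w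
  have hle : lL u w := (hpd w).2 w (hequiv.refl w)
  -- u has no inversions
  have hmono : StrictMono (u : Fin n → Fin n) := by
    intro i j hij
    rcases lt_trichotomy (u i) (u j) with h | h | h
    · exact h
    · exact absurd (u.injective h) (Fin.ne_of_lt hij)
    · exfalso
      have hw' := (hlL u w).mp hle i j hij h
      rw [hwu] at hw'
      have h1 : ((w0 * u) i : ℕ) = n - 1 - (u i : ℕ) := hw0 (u i)
      have h2 : ((w0 * u) j : ℕ) = n - 1 - (u j : ℕ) := hw0 (u j)
      have hlt : ((w0 * u) j : ℕ) < ((w0 * u) i : ℕ) := hw'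
      have hui : (u i : ℕ) < n := (u i).isLt
      have huj : (u j : ℕ) < n := (u j).isLt
      have : (u j : ℕ) < (u i : ℕ) := h
      omega
  have hu1 : u = 1 := strictMono_perm_eq_one u hmono
  have hr1w : r 1 w := by rw [← hu1]; exact (hpd w).1
  have hw1 : w = 1 := hess w (hequiv.symm hr1w)
  have : w0 = 1 := by rw [← hw, hw1, hu1]; simp
  have h0 : (w0 ⟨0, by omega⟩ : ℕ) = n - 1 - 0 := hw0 _
  rw [this] at h0
  simp at h0
  omega
end

section
/- For n ≥ 1, the pop-stack-sorting map on S_n (which reverses each maximal descending run of a permutation) attains ⌊2(n−1)/3⌋ descents: there exists a permutation ζ_n ∈ S_n such that the image of ζ_n under the pop-stack-sorting map has exactly ⌊2(n−1)/3⌋ descents. -/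
private def s11ff (n i : ℕ) : ℕ :=
  if i % 3 = 0 then n / 3 + i / 3
  else if i % 3 = 1 then n / 3 + (n + 2) / 3 + i / 3
  else i / 3

private def s11gg (n v : ℕ) : ℕ :=
  if v < n / 3 then 3 * v + 2
  else if v < n / 3 + (n + 2) / 3 then 3 * (v - n / 3)
  else 3 * (v - n / 3 - (n + 2) / 3) + 1

private lemma s11ff_lt {n i : ℕ} (h : i < n) : s11ff n i < n := by
  unfold s11ff; split_ifs <;> omega

private lemma s11gg_lt {n v : ℕ} (h : v < n) : s11gg n v < n := by
  unfold s11gg; split_ifs <;> omega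

private lemma s11gg_ff {n i : ℕ} (h : i < n) : s11gg n (s11ff n i) = i := by
  unfold s11ff s11gg; split_ifs <;> omega

private lemma s11ff_gg {n v : ℕ} (h : v < n) : s11ff n (s11gg n v) = v := by
  unfold s11ff s11gg; split_ifs <;> omega

private def s11zeta (n : ℕ) : Equiv.Perm (Fin n) :=
  ⟨fun i => ⟨s11ff n i.1, s11ff_lt i.2⟩, fun v => ⟨s11gg n v.1, s11gg_lt v.2⟩,
   fun i => Fin.ext (s11gg_ff i.2), fun v => Fin.ext (s11ff_gg v.2)⟩

private lemma s11zeta_apply {n : ℕ} (i : Fin n) : ((s11zeta n i : Fin n) : ℕ) = s11ff n i := rfl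

private def s11pp (n i : ℕ) : ℕ :=
  if i % 3 = 1 ∧ i + 1 < n then s11ff n (i + 1)
  else if i % 3 = 2 then s11ff n (i - 1)
  else s11ff n i

set_option maxHeartbeats 2000000 in
/-- The pop-stack-sorting map on `S_n` (which reverses each maximal
descending run) attains `⌊2(n-1)/3⌋` descents: there is a permutation `ζ` whose image has
exactly that many descents.  The map `P` is characterized by: whenever `[a, b]` is a
maximal descending run of `w`, then `P w i = w (a + b - i)` for `a ≤ i ≤ b`. -/
theorem stmt_11 (n : ℕ) (hn : 1 ≤ n)
    (P : Equiv.Perm (Fin n) → Equiv.Perm (Fin n))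
    (hP : ∀ (w : Equiv.Perm (Fin n)) (a b : Fin n), a ≤ b →
      -- `w` is decreasing on positions `[a, b]`
      (∀ j k : Fin n, a ≤ j → j < k → k ≤ b → w k < w j) →
      -- the run is maximal on the left
      ((a : ℕ) = 0 ∨ ∃ j : Fin n, (j : ℕ) + 1 = (a : ℕ) ∧ w j < w a) →
      -- the run is maximal on the right
      ((b : ℕ) = n - 1 ∨ ∃ j : Fin n, (j : ℕ) = (b : ℕ) + 1 ∧ w b < w j) →
      -- `P` reverses the run
      ∀ i i' : Fin n, a ≤ i → i ≤ b → (i' : ℕ) = (a : ℕ) + (b : ℕ) - (i : ℕ) →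
        P w i = w i') :
    ∃ ζ : Equiv.Perm (Fin n),
      Set.ncard {i : Fin n | ∃ j : Fin n, (j : ℕ) = (i : ℕ) + 1 ∧ (P ζ) j < (P ζ) i} =
        2 * (n - 1) / 3 := by
  classical
  refine ⟨s11zeta n, ?_⟩
  -- P of zeta at a singleton run
  have single : ∀ i : Fin n, ((i : ℕ) % 3 = 0 ∨ ((i : ℕ) % 3 = 1 ∧ (i : ℕ) + 1 = n)) →
      P (s11zeta n) i = s11zeta n i := by
    intro i hi
    have hi2 := i.2
    refine hP (s11zeta n) i i le_rfl ?_ ?_ ?_ i i le_rfl le_rfl (by omega)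
    · intro j k h1 h2 h3
      exact absurd (lt_of_lt_of_le h2 h3) (not_lt.2 h1)
    · by_cases h0 : (i : ℕ) = 0
      · exact Or.inl h0
      · refine Or.inr ⟨⟨(i : ℕ) - 1, by omega⟩,
          by show (i : ℕ) - 1 + 1 = (i : ℕ); omega, ?_⟩
        rw [Fin.lt_def]
        show s11ff n ((i : ℕ) - 1) < s11ff n (i : ℕ)
        unfold s11ff; split_ifs <;> omega
    · by_cases h0 : (i : ℕ) = n - 1
      · exact Or.inl h0
      · have h1 : (i : ℕ) + 1 < n := by omega
        refine Or.inr ⟨⟨(i : ℕ) + 1, h1⟩, rfl, ?_⟩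
        rw [Fin.lt_def]
        show s11ff n (i : ℕ) < s11ff n ((i : ℕ) + 1)
        unfold s11ff; split_ifs <;> omega
  -- P of zeta at a pair run
  have pair : ∀ (a b : Fin n), (a : ℕ) % 3 = 1 → (b : ℕ) = (a : ℕ) + 1 →
      P (s11zeta n) a = s11zeta n b ∧ P (s11zeta n) b = s11zeta n a := by
    intro a b ha hb
    have ha2 := a.2
    have hb2 := b.2
    have hab : a ≤ b := by rw [Fin.le_def]; omega
    have hdec : ∀ j k : Fin n, a ≤ j → j < k → k ≤ b → s11zeta n k < s11zeta n j := by
      intro j k h1 h2 h3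
      rw [Fin.le_def] at h1 h3
      rw [Fin.lt_def] at h2 ⊢
      show s11ff n (k : ℕ) < s11ff n (j : ℕ)
      unfold s11ff; split_ifs <;> omega
    have hleft : (a : ℕ) = 0 ∨ ∃ j : Fin n, (j : ℕ) + 1 = (a : ℕ) ∧
        s11zeta n j < s11zeta n a := by
      refine Or.inr ⟨⟨(a : ℕ) - 1, by omega⟩,
        by show (a : ℕ) - 1 + 1 = (a : ℕ); omega, ?_⟩
      rw [Fin.lt_def]
      show s11ff n ((a : ℕ) - 1) < s11ff n (a : ℕ)
      unfold s11ff; split_ifs <;> omega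
    have hright : (b : ℕ) = n - 1 ∨ ∃ j : Fin n, (j : ℕ) = (b : ℕ) + 1 ∧
        s11zeta n b < s11zeta n j := by
      by_cases h0 : (b : ℕ) = n - 1
      · exact Or.inl h0
      · have h1 : (b : ℕ) + 1 < n := by omega
        refine Or.inr ⟨⟨(b : ℕ) + 1, h1⟩, rfl, ?_⟩
        rw [Fin.lt_def]
        show s11ff n (b : ℕ) < s11ff n ((b : ℕ) + 1)
        unfold s11ff; split_ifs <;> omega
    exact ⟨hP (s11zeta n) a b hab hdec hleft hright a b le_rfl hab (by omega),
           hP (s11zeta n) a b hab hdec hleft hright b a hab le_rfl (by omega)⟩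
  -- the values of P zeta
  have key : ∀ i : Fin n, ((P (s11zeta n)) i : ℕ) = s11pp n (i : ℕ) := by
    intro i
    have hi2 := i.2
    rcases (show (i : ℕ) % 3 = 0 ∨ (i : ℕ) % 3 = 1 ∨ (i : ℕ) % 3 = 2 by omega) with h | h | h
    · rw [single i (Or.inl h), s11zeta_apply]
      unfold s11pp s11ff; split_ifs <;> omega
    · by_cases hb : (i : ℕ) + 1 < n
      · obtain ⟨h1, _⟩ := pair i ⟨(i : ℕ) + 1, hb⟩ h rfl
        rw [h1]
        show s11ff n ((i : ℕ) + 1) = s11pp n (i : ℕ)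
        unfold s11pp s11ff; split_ifs <;> omega
      · rw [single i (Or.inr ⟨h, by omega⟩), s11zeta_apply]
        unfold s11pp s11ff; split_ifs <;> omega
    · obtain ⟨_, h2⟩ := pair ⟨(i : ℕ) - 1, by omega⟩ i
        (by show ((i : ℕ) - 1) % 3 = 1; omega) (by show (i : ℕ) = (i : ℕ) - 1 + 1; omega)
      rw [h2]
      show s11ff n ((i : ℕ) - 1) = s11pp n (i : ℕ)
      unfold s11pp s11ff; split_ifs <;> omega
  -- descent characterization
  have des_iff : ∀ i : Fin n,
      (∃ j : Fin n, (j : ℕ) = (i : ℕ) + 1 ∧ P (s11zeta n) j < P (s11zeta n) i) ↔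
      ∃ t : ℕ, t < 2 * (n - 1) / 3 ∧ (3 * t + 1) / 2 = (i : ℕ) := by
    intro i
    have hi2 := i.2
    constructor
    · rintro ⟨j, hj, hlt⟩
      have hj2 := j.2
      rw [Fin.lt_def, key j, key i, hj] at hlt
      refine ⟨2 * (i : ℕ) / 3, ?_, ?_⟩ <;>
        · unfold s11pp s11ff at hlt
          split_ifs at hlt <;> omega
    · rintro ⟨t, ht, hti⟩
      have h1 : (i : ℕ) + 1 < n := by omega
      refine ⟨⟨(i : ℕ) + 1, h1⟩, rfl, ?_⟩
      rw [Fin.lt_def, key, key]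
      show s11pp n ((i : ℕ) + 1) < s11pp n (i : ℕ)
      unfold s11pp s11ff; split_ifs <;> omega
  -- counting
  obtain ⟨F, hF⟩ : ∃ F : Fin (2 * (n - 1) / 3) → Fin n,
      ∀ t, (F t : ℕ) = (3 * (t : ℕ) + 1) / 2 :=
    ⟨fun t => ⟨(3 * (t : ℕ) + 1) / 2, by have := t.2; omega⟩, fun t => rfl⟩
  have hinj : Function.Injective F := by
    intro t t' h
    have h' : (F t : ℕ) = (F t' : ℕ) := congrArg Fin.val h
    rw [hF, hF] at h'
    exact Fin.ext (by omega)
  have himg : {i : Fin n | ∃ j : Fin n, (j : ℕ) = (i : ℕ) + 1 ∧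
      P (s11zeta n) j < P (s11zeta n) i} = F '' Set.univ := by
    ext i
    simp only [Set.mem_setOf_eq, Set.mem_image, Set.mem_univ, true_and]
    rw [des_iff i]
    constructor
    · rintro ⟨t, ht, hti⟩
      exact ⟨⟨t, ht⟩, Fin.ext (by rw [hF]; exact hti)⟩
    · rintro ⟨t, rfl⟩
      exact ⟨(t : ℕ), t.2, (hF t).symm⟩
  rw [himg, Set.ncard_image_of_injective _ hinj, Set.ncard_univ, Nat.card_eq_fintype_card,
    Fintype.card_fin]
end

section
/- Let G(q) = Σ_{k≥0} (2/((3k+1)(3k+2)))·binom(4k+1, k+1)·q^{2k+1} be the generating function of 231-avoiding uniquely sorted permutations (nonzero only in odd degrees), and define G̃(q) = q·G′(q)/G(q) − 1 as a formal power series. Then G̃ satisfies the algebraic equation (2(G̃(q)+1))⁴·q² − (G̃(q)+2)³·G̃(q) = 0. -/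
open PowerSeries

/-!
Write `G(q) = q E(q²)` and let `g = 1 + X g⁴`. The coefficients `c k` of `E` satisfy the
first-order recurrence `3(k+2)(3k+4)(3k+5) c (k+1) = 8(2k+1)(4k+3)(4k+5) c k`, so `E` is the
only power series solving the corresponding third-order differential equation in
`θ = X d/dX`. Since `θ g = g (g - 1) / (4 - 3g)`, every `θ`-derivative of `(2 - g) g²` is
rational in `g`, and eliminating `X = (g - 1) / g⁴` shows that `(2 - g) g²` solves the same
equation, so `E = (2 - g) g²`. With `h(q) = g(q²)` this gives `G = q (2 - h) h²` and
`θ G = q h³`, hence `G̃ + 1 = h / (2 - h)`, and the claimed equation reduces to `q² h⁴ = h - 1`.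
-/

theorem Nat.choose_four_mul_add_five (k : ℕ) :
    (4 * k + 5).choose (k + 2) * (3 * (k + 2) * (3 * k + 1) * (3 * k + 2)) =
      (4 * k + 1).choose (k + 1) * (8 * (2 * k + 1) * (4 * k + 3) * (4 * k + 5)) := by
  have h1 := Nat.choose_mul_succ_eq (4 * k + 1) (k + 1)
  have h2 := Nat.choose_mul_succ_eq (4 * k + 2) (k + 1)
  have h3 := Nat.choose_mul_succ_eq (4 * k + 3) (k + 1)
  have h4 := Nat.add_one_mul_choose_eq (4 * k + 4) (k + 1)
  rw [show 4 * k + 1 + 1 - (k + 1) = 3 * k + 1 by omega] at h1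
  rw [show 4 * k + 2 + 1 - (k + 1) = 3 * k + 2 by omega] at h2
  rw [show 4 * k + 3 + 1 - (k + 1) = 3 * k + 3 by omega] at h3
  refine Nat.eq_of_mul_eq_mul_right (show 0 < k + 1 by omega) ?_
  zify at *
  ring_nf at *
  linear_combination (-3 * ((3 * k + 1) * (3 * k + 2) * (k + 1) : ℤ)) * h4
    - ((4 * k + 5) * (3 * k + 1) * (3 * k + 2) : ℤ) * h3
    - ((4 * k + 5) * (4 * k + 4) * (3 * k + 1) : ℤ) * h2
    - ((4 * k + 5) * (4 * k + 4) * (4 * k + 3) : ℤ) * h1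

theorem Derivation.map_ofNat {R A M : Type*} [CommSemiring R] [CommSemiring A] [Algebra R A]
    [AddCommMonoid M] [Module A M] [Module R M] [IsScalarTower R A M] (D : Derivation R A M)
    (n : ℕ) [n.AtLeastTwo] : D (ofNat(n) : A) = 0 :=
  D.map_natCast n

namespace PowerSeries

variable {R : Type*} [CommRing R]

theorem exists_isFixedPt_of_X_pow_dvd_sub {F : R⟦X⟧ → R⟦X⟧}
    (hF : ∀ a b n, X ^ n ∣ a - b → X ^ (n + 1) ∣ F a - F b) :
    ∃ a, Function.IsFixedPt F a := by
  set u : ℕ → R⟦X⟧ := fun n => F^[n] 0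
  have hstep (n : ℕ) : X ^ n ∣ u (n + 1) - u n := by
    induction n with
    | zero => simp
    | succ n ih => simpa only [u, Function.iterate_succ_apply'] using hF _ _ _ ih
  have hcauchy {n m : ℕ} (h : n ≤ m) : X ^ n ∣ u m - u n := by
    induction m, h using Nat.le_induction with
    | base => simp
    | succ m hnm ih => simpa using dvd_add ((pow_dvd_pow X hnm).trans (hstep m)) ih
  set a := mk fun n => coeff n (u (n + 1))
  have hlim (n : ℕ) : X ^ n ∣ a - u n := by
    refine X_pow_dvd_iff.mpr fun m hm => ?_
    have := X_pow_dvd_iff.mp (hcauchy (show m + 1 ≤ n by omega)) m (by omega)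
    simp only [map_sub, coeff_mk, a] at this ⊢
    linear_combination -this
  refine ⟨a, ext fun n => ?_⟩
  have hfix : X ^ (n + 1) ∣ F a - a := by
    simpa [u, Function.iterate_succ_apply'] using dvd_sub (hF _ _ _ (hlim n)) (hlim (n + 1))
  simpa [sub_eq_zero] using X_pow_dvd_iff.mp hfix n (by omega)

theorem exists_eq_one_add_X_mul_pow (d : ℕ) : ∃ g : R⟦X⟧, g = 1 + X * g ^ d := by
  obtain ⟨g, hg⟩ := exists_isFixedPt_of_X_pow_dvd_sub (F := fun g : R⟦X⟧ => 1 + X * g ^ d)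
    fun a b n h => by
      rw [add_sub_add_left_eq_sub, ← mul_sub, pow_succ']
      exact mul_dvd_mul_left X (h.trans (sub_dvd_pow_sub_pow a b d))
  exact ⟨g, hg.symm⟩

theorem constantCoeff_eq_one_of_eq_one_add {g : R⟦X⟧} {m d : ℕ} (hm : m ≠ 0)
    (hg : g = 1 + X ^ m * g ^ d) : constantCoeff g = 1 := by
  simpa [zero_pow hm] using congrArg constantCoeff hg

theorem eq_X_mul_expand_mk {G : R⟦X⟧} {c : ℕ → R} (hodd : ∀ k, coeff (2 * k + 1) G = c k)
    (heven : ∀ k, coeff (2 * k) G = 0) : G = X * expand 2 two_ne_zero (mk c) := by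
  ext n
  obtain ⟨k, rfl | rfl⟩ := Nat.even_or_odd' n
  · cases k with
    | zero => simpa using heven 0
    | succ k =>
      rw [heven, show 2 * (k + 1) = 2 * k + 1 + 1 by ring, coeff_succ_X_mul,
        coeff_expand_of_not_dvd _ _ _ (by omega)]
  · rw [hodd, coeff_succ_X_mul, coeff_expand_mul, coeff_mk]

noncomputable def eulerOp : Derivation R R⟦X⟧ R⟦X⟧ := (X : R⟦X⟧) • d⁄dX R

theorem eulerOp_apply (f : R⟦X⟧) : eulerOp f = X * d⁄dX R f := rfl

theorem coeff_eulerOp (f : R⟦X⟧) (n : ℕ) : coeff n (eulerOp f) = n * coeff n f := by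
  cases n with
  | zero => simp [eulerOp_apply]
  | succ n => rw [eulerOp_apply, coeff_succ_X_mul, coeff_derivative]; push_cast; ring

theorem eulerOp_X_pow (m : ℕ) : eulerOp (X ^ m : R⟦X⟧) = (m : R⟦X⟧) * X ^ m := by
  ext n
  rw [coeff_eulerOp, coeff_X_pow, ← map_natCast (C (R := R)), coeff_C_mul, coeff_X_pow]
  split_ifs with h <;> simp [h]

theorem eulerOp_X : eulerOp (X : R⟦X⟧) = X := by
  simpa using eulerOp_X_pow (R := R) 1

theorem coeff_eulerOp_pow (k : ℕ) (f : R⟦X⟧) (n : ℕ) :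
    coeff n (((eulerOp (R := R)).toLinearMap ^ k) f) = (n : R) ^ k * coeff n f := by
  induction k with
  | zero => simp
  | succ k ih =>
    rw [pow_succ', Module.End.mul_apply, Derivation.coeFn_coe, coeff_eulerOp, ih]
    ring

theorem coeff_aeval_eulerOp (P : Polynomial R) (f : R⟦X⟧) (n : ℕ) :
    coeff n (Polynomial.aeval (eulerOp (R := R)).toLinearMap P f) =
      P.eval (n : R) * coeff n f := by
  induction P using Polynomial.induction_on' with
  | add p q hp hq => simp [hp, hq, add_mul]
  | monomial k a =>
    rw [Polynomial.aeval_monomial, Module.End.mul_apply, Module.algebraMap_end_apply, map_smul,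
      coeff_eulerOp_pow]
    simp [mul_assoc]

noncomputable def hypergeomOp (P Q : Polynomial R) (f : R⟦X⟧) : R⟦X⟧ :=
  Polynomial.aeval (eulerOp (R := R)).toLinearMap P f -
    X * Polynomial.aeval (eulerOp (R := R)).toLinearMap Q f

section HypergeomOp

variable (P Q : Polynomial R)

theorem coeff_zero_hypergeomOp (f : R⟦X⟧) :
    coeff 0 (hypergeomOp P Q f) = P.eval 0 * coeff 0 f := by
  rw [hypergeomOp, map_sub, coeff_aeval_eulerOp]
  simp

theorem coeff_succ_hypergeomOp (f : R⟦X⟧) (n : ℕ) :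
    coeff (n + 1) (hypergeomOp P Q f) =
      P.eval ((n : R) + 1) * coeff (n + 1) f - Q.eval (n : R) * coeff n f := by
  simp [hypergeomOp, coeff_aeval_eulerOp]

theorem hypergeomOp_mk {c : ℕ → R}
    (hc : ∀ n : ℕ, P.eval ((n : R) + 1) * c (n + 1) = Q.eval (n : R) * c n) :
    hypergeomOp P Q (mk c) = C (P.eval 0 * c 0) := by
  ext (_ | n)
  · simp [coeff_zero_hypergeomOp]
  · simp [coeff_succ_hypergeomOp, hc]

theorem hypergeomOp_injective [IsDomain R] (hP : ∀ n : ℕ, P.eval (n : R) ≠ 0) :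
    Function.Injective (hypergeomOp P Q) := by
  intro f g hfg
  ext n
  induction n with
  | zero =>
    have := congrArg (coeff 0) hfg
    rw [coeff_zero_hypergeomOp, coeff_zero_hypergeomOp] at this
    exact mul_left_cancel₀ (by simpa using hP 0) this
  | succ n ih =>
    have := congrArg (coeff (n + 1)) hfg
    rw [coeff_succ_hypergeomOp, coeff_succ_hypergeomOp, ih, sub_left_inj] at this
    exact mul_left_cancel₀ (by simpa using hP (n + 1)) this

end HypergeomOp

section QuarticEquation

variable {g : R⟦X⟧} {m : ℕ}

theorem eulerOp_mul_four_sub_three (hg : g = 1 + X ^ m * g ^ 4) :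
    eulerOp g * (4 - 3 * g) = m * g * (g - 1) := by
  have h := congrArg eulerOp hg
  rw [map_add, Derivation.map_one_eq_zero, Derivation.leibniz, Derivation.leibniz_pow,
    eulerOp_X_pow, smul_eq_mul, smul_eq_mul, nsmul_eq_mul, smul_eq_mul] at h
  linear_combination g * h - (4 * eulerOp g + m * g) * hg

theorem eulerOp_two_sub_mul_sq (hg : g = 1 + X ^ m * g ^ 4) :
    eulerOp ((2 - g) * g ^ 2) = (m : R⟦X⟧) * g ^ 2 * (g - 1) := by
  have h := eulerOp_mul_four_sub_three hg
  rw [Derivation.leibniz, Derivation.leibniz_pow, map_sub, Derivation.map_ofNat, smul_eq_mul,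
    smul_eq_mul, smul_eq_mul, nsmul_eq_mul]
  linear_combination g * h

theorem eulerOp_X_mul_two_sub_mul_sq (hg : g = 1 + X ^ 2 * g ^ 4) :
    eulerOp (X * ((2 - g) * g ^ 2)) = X * g ^ 3 := by
  rw [Derivation.leibniz, eulerOp_two_sub_mul_sq hg, eulerOp_X, smul_eq_mul, smul_eq_mul]
  push_cast
  ring

end QuarticEquation

end PowerSeries

namespace UniquelySorted

variable {R : Type*} [CommRing R]

/-- Expanded from `3 (n + 1) (3n + 1) (3n + 2)`. -/
noncomputable def ratioDen : Polynomial R :=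
  27 * Polynomial.X ^ 3 + 54 * Polynomial.X ^ 2 + 33 * Polynomial.X + 6

/-- Expanded from `8 (2n + 1) (4n + 3) (4n + 5)`. -/
noncomputable def ratioNum : Polynomial R :=
  256 * Polynomial.X ^ 3 + 640 * Polynomial.X ^ 2 + 496 * Polynomial.X + 120

theorem hypergeomOp_ratioDen_ratioNum (f : R⟦X⟧) :
    hypergeomOp ratioDen ratioNum f =
      27 * eulerOp (eulerOp (eulerOp f)) + 54 * eulerOp (eulerOp f) + 33 * eulerOp f + 6 * f -
        X * (256 * eulerOp (eulerOp (eulerOp f)) + 640 * eulerOp (eulerOp f) + 496 * eulerOp f +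
          120 * f) := by
  simp only [hypergeomOp, ratioDen, ratioNum, map_add, map_mul, map_ofNat, map_one,
    Polynomial.aeval_X, LinearMap.add_apply, Module.End.mul_apply, pow_succ, pow_zero,
    Module.End.one_apply, Module.End.ofNat_apply, Derivation.coeFn_coe, nsmul_eq_mul,
    Nat.cast_ofNat]

theorem hypergeomOp_two_sub_mul_sq {g : R⟦X⟧} (hg : g = 1 + X * g ^ 4) :
    hypergeomOp ratioDen ratioNum ((2 - g) * g ^ 2) = 6 := by
  have hg' : g = 1 + X ^ 1 * g ^ 4 := by rwa [pow_one]
  set E := (2 - g) * g ^ 2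
  set D := 4 - 3 * g
  have hD : IsUnit D := by
    rw [isUnit_iff_constantCoeff]
    simp only [D, map_sub, map_mul, map_ofNat, constantCoeff_eq_one_of_eq_one_add one_ne_zero hg']
    norm_num
  have hθg := eulerOp_mul_four_sub_three hg'
  have h1 : eulerOp E = g ^ 2 * (g - 1) := by
    rw [eulerOp_two_sub_mul_sq hg', Nat.cast_one, one_mul]
  have h2 : D * eulerOp (eulerOp E) = g ^ 2 * (g - 1) * (3 * g - 2) := by
    rw [h1, Derivation.leibniz, Derivation.leibniz_pow, map_sub, Derivation.map_one_eq_zero,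
      smul_eq_mul, smul_eq_mul, smul_eq_mul, nsmul_eq_mul]
    linear_combination (3 * g ^ 2 - 2 * g) * hθg
  have h3 : D ^ 3 * eulerOp (eulerOp (eulerOp E)) =
      -16 * g ^ 2 + 82 * g ^ 3 - 144 * g ^ 4 + 105 * g ^ 5 - 27 * g ^ 6 := by
    have h2' := congrArg eulerOp h2
    simp only [D, Derivation.leibniz, Derivation.leibniz_pow, map_sub, Derivation.map_one_eq_zero,
      Derivation.map_ofNat, smul_eq_mul, nsmul_eq_mul] at h2'
    linear_combination D ^ 2 * h2' + 3 * eulerOp g * D * h2 +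
      (D * (12 * g ^ 3 - 15 * g ^ 2 + 4 * g) + 3 * g ^ 2 * (g - 1) * (3 * g - 2)) * hθg
  refine (hD.pow 3).mul_left_cancel ?_
  rw [hypergeomOp_ratioDen_ratioNum]
  -- after clearing `D`, the operator leaves a multiple of `g - 1 - X g⁴`
  linear_combination (27 - 256 * X) * h3 + (54 - 640 * X) * D ^ 2 * h2 +
    (33 - 496 * X) * D ^ 3 * h1 + 24 * (9 * g ^ 2 - 20 * g + 16) * hg

noncomputable def count (k : ℕ) : ℚ :=
  2 / ((3 * (k : ℚ) + 1) * (3 * (k : ℚ) + 2)) * ((4 * k + 1).choose (k + 1) : ℚ)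

theorem ratioDen_eval_ne_zero (n : ℕ) : (ratioDen : Polynomial ℚ).eval (n : ℚ) ≠ 0 := by
  simp only [ratioDen, Polynomial.eval_add, Polynomial.eval_mul, Polynomial.eval_pow,
    Polynomial.eval_X, Polynomial.eval_ofNat]
  positivity

theorem count_succ (k : ℕ) :
    (ratioDen : Polynomial ℚ).eval ((k : ℚ) + 1) * count (k + 1) =
      (ratioNum : Polynomial ℚ).eval (k : ℚ) * count k := by
  have h : ((4 * k + 5).choose (k + 2) : ℚ) * (3 * (k + 2) * (3 * k + 1) * (3 * k + 2)) =
      (4 * k + 1).choose (k + 1) * (8 * (2 * k + 1) * (4 * k + 3) * (4 * k + 5)) := by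
    exact_mod_cast Nat.choose_four_mul_add_five k
  simp only [ratioDen, ratioNum, count, Polynomial.eval_add, Polynomial.eval_mul,
    Polynomial.eval_pow, Polynomial.eval_X, Polynomial.eval_ofNat]
  rw [show 4 * (k + 1) + 1 = 4 * k + 5 by ring, show k + 1 + 1 = k + 2 by ring]
  push_cast
  field_simp
  linear_combination (3 * (k : ℚ) + 4) * (3 * k + 5) * h

theorem mk_count_eq {g : ℚ⟦X⟧} (hg : g = 1 + X * g ^ 4) : mk count = (2 - g) * g ^ 2 := by
  refine hypergeomOp_injective ratioDen ratioNum ratioDen_eval_ne_zero ?_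
  rw [hypergeomOp_mk _ _ count_succ, hypergeomOp_two_sub_mul_sq hg]
  norm_num [count, ratioDen]
  exact map_ofNat C 6

end UniquelySorted

/-- Let `G(q) = Σ_{k≥0} (2/((3k+1)(3k+2))) * binom(4k+1, k+1) * q^(2k+1)` be
the generating function of 231-avoiding uniquely sorted permutations, and let
`G̃ = q·G′/G − 1` (equivalently, `(G̃ + 1) * G = q * G′`).  Then
`(2(G̃+1))⁴·q² − (G̃+2)³·G̃ = 0`. -/
theorem stmt_17 (G Gt : PowerSeries ℚ)
    (hGodd : ∀ k : ℕ, coeff (2 * k + 1) G =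
      2 / ((3 * (k : ℚ) + 1) * (3 * (k : ℚ) + 2)) * ((4 * k + 1).choose (k + 1) : ℚ))
    (hGeven : ∀ k : ℕ, coeff (2 * k) G = 0)
    (hGt : (Gt + 1) * G = X * derivative ℚ G) :
    (2 * (Gt + 1)) ^ 4 * X ^ 2 - (Gt + 2) ^ 3 * Gt = 0 := by
  obtain ⟨g, hg⟩ := exists_eq_one_add_X_mul_pow (R := ℚ) 4
  set h := expand 2 two_ne_zero g
  have hh : h = 1 + X ^ 2 * h ^ 4 := by simpa [h] using congrArg (expand 2 two_ne_zero) hg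
  have hh0 := constantCoeff_eq_one_of_eq_one_add two_ne_zero hh
  have hG : G = X * ((2 - h) * h ^ 2) := by
    rw [eq_X_mul_expand_mk (c := UniquelySorted.count) hGodd hGeven,
      UniquelySorted.mk_count_eq hg, map_mul, map_sub, map_ofNat, map_pow]
  have hs : (Gt + 1) * (2 - h) = h := by
    rw [← eulerOp_apply, hG, eulerOp_X_mul_two_sub_mul_sq hh] at hGt
    have hXh : (X : ℚ⟦X⟧) * h ^ 2 ≠ 0 :=
      mul_ne_zero X_ne_zero (pow_ne_zero 2 fun h0 => by simp [h0] at hh0)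
    exact mul_right_cancel₀ hXh (by linear_combination hGt)
  have hw : (2 - h) ^ 4 ≠ 0 := pow_ne_zero 4 fun h0 => by
    have := congrArg constantCoeff h0
    rw [map_sub, map_ofNat, hh0] at this
    norm_num at this
  refine mul_left_cancel₀ hw ?_
  calc (2 - h) ^ 4 * ((2 * (Gt + 1)) ^ 4 * X ^ 2 - (Gt + 2) ^ 3 * Gt)
      = 16 * ((Gt + 1) * (2 - h)) ^ 4 * X ^ 2 -
          ((Gt + 1) * (2 - h) + (2 - h)) ^ 3 * ((Gt + 1) * (2 - h) - (2 - h)) := by ring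
    _ = 16 * h ^ 4 * X ^ 2 - (h + (2 - h)) ^ 3 * (h - (2 - h)) := by rw [hs]
    _ = (2 - h) ^ 4 * 0 := by linear_combination -16 * hh
end
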